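/- arXiv:2104.02887 — 4 statements merged into one kernel-verified Lean document; each statement's English description precedes it below -/
import Mathlib

section
/- Let p : E → B be a groupoid fibration. A functor q : F → E is a groupoid fibration if and only if the composite p ∘ q : F → B is a groupoid fibration. -/
open CategoryTheory

universe v₁ v₂ v₃ u₁ u₂ u₃

variable {F : Type u₁} {E : Type u₂} {B : Type u₃}
  [Category.{v₁} F] [Category.{v₂} E] [Category.{v₃} B]

/-- A morphism `χ : e' ⟶ e` of `E` is *cartesian* for `p : E ⥤ B` when, for every `k ∈ E`,
the comparison square of hom-sets induced by `p` is a pullback of sets. -/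
def IsCartesianFor {E : Type u₂} {B : Type u₃} [Category.{v₂} E] [Category.{v₃} B]
    (p : E ⥤ B) {e' e : E} (χ : e' ⟶ e) : Prop :=
  ∀ (k : E) (g : k ⟶ e) (β : p.obj k ⟶ p.obj e'),
    p.map g = β ≫ p.map χ → ∃! h : k ⟶ e', h ≫ χ = g ∧ p.map h = β

/-- `p : E ⥤ B` is a *groupoid fibration* when every `β : b ⟶ p e` factors as
`σ.hom ≫ p χ` with `σ` an isomorphism, and every morphism of `E` is cartesian for `p`. -/
def GroupoidFibration {E : Type u₂} {B : Type u₃} [Category.{v₂} E] [Category.{v₃} B]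
    (p : E ⥤ B) : Prop :=
  (∀ (e : E) (b : B) (β : b ⟶ p.obj e),
      ∃ (e' : E) (χ : e' ⟶ e) (σ : b ≅ p.obj e'), β = σ.hom ≫ p.map χ) ∧
  (∀ {e' e : E} (χ : e' ⟶ e), IsCartesianFor p χ)

/-- If `p : E ⥤ B` is a groupoid fibration, then `q : F ⥤ E` is a groupoid fibration
if and only if the composite `q ⋙ p : F ⥤ B` is a groupoid fibration. -/
theorem groupoidFibration_comp_iff (p : E ⥤ B) (hp : GroupoidFibration p) (q : F ⥤ E) :
    GroupoidFibration q ↔ GroupoidFibration (q ⋙ p) := by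
  constructor
  · rintro ⟨hq1, hq2⟩
    constructor
    · intro f b β
      obtain ⟨e', χ, σ, hσ⟩ := hp.1 (q.obj f) b β
      obtain ⟨f', χ', τ, hτ⟩ := hq1 f e' χ
      refine ⟨f', χ', σ ≪≫ p.mapIso τ, ?_⟩
      simp [hσ, hτ]
    · intro f' f χ k g β hβ
      obtain ⟨h₁, ⟨hh₁, hph₁⟩, uniq₁⟩ := hp.2 (q.map χ) (q.obj k) (q.map g) β hβ
      obtain ⟨h, ⟨hh, hqh⟩, uniq⟩ := hq2 χ k g h₁ hh₁.symm
      refine ⟨h, ⟨hh, ?_⟩, ?_⟩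
      · show p.map (q.map h) = β
        rw [hqh, hph₁]
      · rintro h' ⟨hh', hph'⟩
        exact uniq h' ⟨hh', uniq₁ (q.map h') ⟨by rw [← q.map_comp, hh'], hph'⟩⟩
  · rintro ⟨hc1, hc2⟩
    constructor
    · intro f e β
      obtain ⟨f', χ, σ, hσ⟩ := hc1 f (p.obj e) (p.map β)
      obtain ⟨τh, ⟨hτχ, hpτ⟩, _⟩ := hp.2 (q.map χ) e β σ.hom hσ
      have : IsIso τh := by
        obtain ⟨s, ⟨hs1, hs2⟩, _⟩ := hp.2 τh (q.obj f') (𝟙 _) σ.inv (by simp [hpτ])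
        obtain ⟨_, _, uniq2⟩ := hp.2 τh e τh (𝟙 _) (by simp)
        refine ⟨s, ?_, hs1⟩
        have h1 := uniq2 (τh ≫ s) ⟨by rw [Category.assoc, hs1, Category.comp_id],
          by simp [hpτ, hs2]⟩
        have h2 := uniq2 (𝟙 e) ⟨by simp, by simp⟩
        rw [h1, h2]
      exact ⟨f', χ, asIso τh, hτχ.symm⟩
    · intro f' f χ k g β hβ
      have hpβ : (q ⋙ p).map g = p.map β ≫ (q ⋙ p).map χ := by
        show p.map (q.map g) = p.map β ≫ p.map (q.map χ)
        rw [hβ, p.map_comp]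
      obtain ⟨h, ⟨hh, hph⟩, uniq⟩ := hc2 χ k g (p.map β) hpβ
      have hq : q.map h = β := by
        obtain ⟨t, ht, uniqt⟩ := hp.2 (q.map χ) (q.obj k) (q.map g) (p.map β) hpβ
        rw [uniqt (q.map h) ⟨by rw [← q.map_comp, hh], hph⟩, uniqt β ⟨hβ.symm, rfl⟩]
      exact ⟨h, ⟨hh, hq⟩, fun h' ⟨hh', hqh'⟩ => uniq h' ⟨hh', by
        show p.map (q.map h') = p.map β
        rw [hqh']⟩⟩
end

section
/- A functor p : E → B is an equivalence if and only if both the induced functor on core groupoids υp : υE → υB and the induced functor on core groupoids of arrow categories υ(p^2) : υ(E^2) → υ(B^2) are equivalences. -/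
open CategoryTheory

universe v₁ v₂ u₁ u₂

/-- The functor `υ E ⥤ υ B` induced on core groupoids by `p : E ⥤ B`. -/
def coreMap {E : Type u₁} {B : Type u₂} [Category.{v₁} E] [Category.{v₂} B] (p : E ⥤ B) :
    Core E ⥤ Core B where
  obj e := ⟨p.obj e.of⟩
  map f := ⟨p.mapIso f.iso⟩
  map_id _ := Core.hom_ext (by simp)
  map_comp _ _ := Core.hom_ext (by simp [coreCategory_comp_iso])

section Aux

variable {E : Type u₁} {B : Type u₂} [Category.{v₁} E] [Category.{v₂} B]

lemma coreMap_faithful' (p : E ⥤ B) (h : (coreMap p).Faithful) {X Y : E} (f g : X ≅ Y)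
    (hfg : p.mapIso f = p.mapIso g) : f = g :=
  congrArg CoreHom.iso (h.map_injective (X := ⟨X⟩) (Y := ⟨Y⟩) (a₁ := CoreHom.mk f)
    (a₂ := CoreHom.mk g) (congrArg CoreHom.mk hfg))

lemma coreMap_full' (p : E ⥤ B) (h : (coreMap p).Full) {X Y : E} (φ : p.obj X ≅ p.obj Y) :
    ∃ ψ : X ≅ Y, p.mapIso ψ = φ :=
  let ⟨ψ, hψ⟩ := h.map_surjective (X := ⟨X⟩) (Y := ⟨Y⟩)
    (CoreHom.mk φ : ((⟨p.obj X⟩ : Core B) ⟶ ⟨p.obj Y⟩))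
  ⟨ψ.iso, congrArg CoreHom.iso hψ⟩

lemma coreMap_essSurj' (p : E ⥤ B) (h : (coreMap p).EssSurj) (b : B) :
    ∃ e : E, Nonempty (p.obj e ≅ b) := by
  obtain ⟨e, ⟨i⟩⟩ := h.mem_essImage ⟨b⟩
  exact ⟨e.of, ⟨i.hom.iso⟩⟩

lemma coreMap_isEquivalence (p : E ⥤ B) [p.IsEquivalence] : (coreMap p).IsEquivalence where
  faithful := ⟨fun {X Y} f g h => Core.hom_ext (p.map_injective (congrArg (fun k => k.iso.hom) h))⟩
  full := ⟨fun {X Y} φ => ⟨⟨p.preimageIso φ.iso⟩, Core.hom_ext (by simp [coreMap])⟩⟩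
  essSurj := ⟨fun b => ⟨⟨p.objPreimage b.of⟩,
    ⟨(Groupoid.isoEquivHom ((coreMap p).obj ⟨p.objPreimage b.of⟩) b).symm
      ⟨p.objObjPreimageIso b.of⟩⟩⟩⟩

end Aux

/-- `p : E ⥤ B` is an equivalence iff both `υ p : υ E ⥤ υ B` and
`υ (p²) : υ (E²) ⥤ υ (B²)` (the core of the induced functor on arrow categories)
are equivalences. -/
theorem isEquivalence_iff_core_and_coreArrow {E : Type u₁} {B : Type u₂}
    [Category.{v₁} E] [Category.{v₂} B] (p : E ⥤ B) :
    p.IsEquivalence ↔ ((coreMap p).IsEquivalence ∧ (coreMap p.mapArrow).IsEquivalence) := by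
  constructor
  · intro h
    exact ⟨coreMap_isEquivalence p, coreMap_isEquivalence p.mapArrow⟩
  · rintro ⟨h1, h2⟩
    have faithful : p.Faithful := by
      constructor
      intro e e' f g hfg
      let σ : p.mapArrow.obj (Arrow.mk f) ≅ p.mapArrow.obj (Arrow.mk g) :=
        Arrow.isoMk (Iso.refl _) (Iso.refl _) (by change 𝟙 _ ≫ p.map g = p.map f ≫ 𝟙 _; simp [hfg])
      obtain ⟨τ, hτ⟩ := coreMap_full' p.mapArrow h2.full σ
      have hleft : p.map τ.hom.left = 𝟙 (p.obj e) := by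
        have := congrArg (fun (i : p.mapArrow.obj (Arrow.mk f) ≅ p.mapArrow.obj (Arrow.mk g)) => i.hom.left) hτ
        exact this
      have hright : p.map τ.hom.right = 𝟙 (p.obj e') := by
        have := congrArg (fun (i : p.mapArrow.obj (Arrow.mk f) ≅ p.mapArrow.obj (Arrow.mk g)) => i.hom.right) hτ
        exact this
      have hl : Arrow.leftFunc.mapIso τ = Iso.refl e :=
        coreMap_faithful' p h1.faithful _ _ (Iso.ext (hleft.trans (p.map_id e).symm))
      have hr : Arrow.rightFunc.mapIso τ = Iso.refl e' :=
        coreMap_faithful' p h1.faithful _ _ (Iso.ext (hright.trans (p.map_id e').symm))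
      have hl' : τ.hom.left = 𝟙 e := congrArg Iso.hom hl
      have hr' : τ.hom.right = 𝟙 e' := congrArg Iso.hom hr
      simpa [hl', hr'] using τ.hom.w.symm
    have full : p.Full := by
      constructor
      intro e e' g
      obtain ⟨f, ⟨sq⟩⟩ := coreMap_essSurj' p.mapArrow h2.essSurj (Arrow.mk g)
      let u : p.obj f.left ≅ p.obj e := Arrow.leftFunc.mapIso sq
      let v : p.obj f.right ≅ p.obj e' := Arrow.rightFunc.mapIso sq
      obtain ⟨ub, hub⟩ := coreMap_full' p h1.full u
      obtain ⟨vb, hvb⟩ := coreMap_full' p h1.full v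
      refine ⟨ub.inv ≫ f.hom ≫ vb.hom, ?_⟩
      have hv : p.map vb.hom = sq.hom.right := by
        have := congrArg Iso.hom hvb; exact this
      have hu' : p.map ub.inv = sq.inv.left := by
        have := congrArg Iso.inv hub; exact this
      have hw := sq.hom.w
      simp only [Arrow.mk_hom, Functor.mapArrow_obj, Functor.id_map] at hw
      change sq.hom.left ≫ g = p.map f.hom ≫ sq.hom.right at hw
      simp only [Functor.map_comp, hu', hv]
      rw [← hw]
      have : sq.inv.left ≫ sq.hom.left = 𝟙 _ := by
        rw [← Arrow.comp_left, sq.inv_hom_id]; rfl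
      exact (Category.assoc _ _ _).symm.trans (by erw [this]; simp)
    have essSurj : p.EssSurj := by
      constructor
      intro b
      obtain ⟨e, ⟨i⟩⟩ := coreMap_essSurj' p h1.essSurj b
      exact ⟨e, ⟨i⟩⟩
    exact ⟨faithful, full, essSurj⟩
end

section
/- Ultimate functors are taken by π₁ to equivalences: if j : A → B is such that π₁(b/j) ≃ 1 for all b ∈ B, then π₁(j) : π₁A → π₁B is an equivalence of groupoids. -/
open CategoryTheory

universe v₁ v₂ v₃ u₁ u₂ u₃

/-- The fundamental groupoid `π₁ C` of a category `C`: the localization of `C`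
at all of its morphisms. -/
abbrev piOne (C : Type u₁) [Category.{v₁} C] :=
  (⊤ : MorphismProperty C).Localization

/-- `π₁ C` is trivial: the localization of `C` at all morphisms is equivalent to the
terminal groupoid (the one-object one-morphism category). -/
def PiOneTrivial (C : Type u₁) [Category.{v₁} C] : Prop :=
  Nonempty (piOne C ≌ Discrete PUnit.{1})

/-- A functor `j : A ⥤ B` is *ultimate* when, for every `b : B`, the fundamental groupoid
`π₁ (b/j)` of the comma category `b/j` is equivalent to the terminal groupoid. -/
def Ultimate {A : Type u₁} {B : Type u₂} [Category.{v₁} A] [Category.{v₂} B]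
    (j : A ⥤ B) : Prop :=
  ∀ b : B, PiOneTrivial (StructuredArrow b j)
/-- The functor `π₁ A ⥤ π₁ B` induced by `j : A ⥤ B` on fundamental groupoids. -/
noncomputable def piOneMap {A : Type u₁} {B : Type u₂} [Category.{v₁} A] [Category.{v₂} B] (j : A ⥤ B) :
    piOne A ⥤ piOne B :=
  Localization.Construction.lift (j ⋙ (⊤ : MorphismProperty B).Q)
    (fun _ _ f _ =>
      Localization.inverts (⊤ : MorphismProperty B).Q ⊤ (j.map f)
        (MorphismProperty.top_apply _))


-- Step 1: whiskering along a localization functor into a groupoid is an equivalence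
lemma whiskeringLeft_loc_isEquivalence {C : Type u₁} {D : Type u₂} [Category.{v₁} C]
    [Category.{v₂} D] (L : C ⥤ D) (W : MorphismProperty C) [L.IsLocalization W]
    (G : Type u₃) [Groupoid.{v₃} G] :
    ((Functor.whiskeringLeft C D G).obj L).IsEquivalence := by
  haveI := Localization.full_whiskeringLeft L W G
  haveI := Localization.faithful_whiskeringLeft L W G
  haveI : ((Functor.whiskeringLeft C D G).obj L).EssSurj :=
    ⟨fun F => ⟨Localization.lift F (show W.IsInvertedBy F from fun _ _ f _ => inferInstance) L,
      ⟨Localization.fac F (show W.IsInvertedBy F from fun _ _ f _ => inferInstance) L⟩⟩⟩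
  exact ⟨inferInstance, inferInstance, inferInstance⟩

-- Step 2: const is an equivalence when piOne is trivial
lemma const_isEquivalence {C : Type u₁} [Category.{v₁} C] (h : PiOneTrivial C)
    (G : Type u₃) [Groupoid.{v₃} G] :
    (Functor.const C : G ⥤ C ⥤ G).IsEquivalence := by
  obtain ⟨e⟩ := h
  haveI h1 : ((Functor.whiskeringLeft C (piOne C) G).obj (⊤ : MorphismProperty C).Q).IsEquivalence :=
    whiskeringLeft_loc_isEquivalence _ ⊤ G
  haveI h2 : ((Functor.whiskeringLeft (piOne C) (Discrete PUnit.{1}) G).obj e.functor).IsEquivalence :=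
    Functor.isEquivalence_of_iso (Iso.refl _) (F := (e.symm.congrLeft (E := G)).functor)
  haveI h3 : (Functor.const (Discrete PUnit.{1}) : G ⥤ _).IsEquivalence := by
    haveI : (Functor.const (Discrete PUnit.{1}) : G ⥤ _).Faithful :=
      ⟨fun {X Y} f g hfg => by
        have := congrArg (fun τ => NatTrans.app τ ⟨PUnit.unit⟩) hfg
        simpa using this⟩
    haveI : (Functor.const (Discrete PUnit.{1}) : G ⥤ _).Full :=
      ⟨fun {X Y} τ => ⟨τ.app ⟨PUnit.unit⟩, by
        ext ⟨⟨⟩⟩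
        rfl⟩⟩
    haveI : (Functor.const (Discrete PUnit.{1}) : G ⥤ _).EssSurj :=
      ⟨fun F => ⟨F.obj ⟨PUnit.unit⟩, ⟨NatIso.ofComponents
        (fun ⟨⟨⟩⟩ => Iso.refl _) (by rintro ⟨⟨⟩⟩ ⟨⟨⟩⟩ f; simp)⟩⟩⟩
    exact ⟨inferInstance, inferInstance, inferInstance⟩
  haveI : ((Functor.const (Discrete PUnit.{1}) : G ⥤ _) ⋙
      (Functor.whiskeringLeft (piOne C) (Discrete PUnit.{1}) G).obj e.functor ⋙
      (Functor.whiskeringLeft C (piOne C) G).obj (⊤ : MorphismProperty C).Q).IsEquivalence := by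
    infer_instance
  refine Functor.isEquivalence_of_iso ?_
    (F := (Functor.const (Discrete PUnit.{1}) : G ⥤ _) ⋙
      (Functor.whiskeringLeft (piOne C) (Discrete PUnit.{1}) G).obj e.functor ⋙
      (Functor.whiskeringLeft C (piOne C) G).obj (⊤ : MorphismProperty C).Q)
  exact NatIso.ofComponents
    (fun g => NatIso.ofComponents (fun c => Iso.refl g) (by intros; simp))
    (by intros; ext c; simp)


lemma isConnected_of_piOneTrivial {C : Type u₁} [Category.{v₁} C] (h : PiOneTrivial C) :
    IsConnected C := by
  obtain ⟨e⟩ := h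
  have hne : Nonempty C :=
    ⟨(Localization.Construction.objEquiv (⊤ : MorphismProperty C)).symm
      (e.inverse.obj ⟨PUnit.unit⟩)⟩
  have hpre : IsPreconnected C := by
    constructor
    intro α F c
    haveI := const_isEquivalence ⟨e⟩ (Discrete α)
    haveI : (Functor.const C : Discrete α ⥤ _).EssSurj := inferInstance
    obtain ⟨x, ⟨φ⟩⟩ := Functor.EssSurj.mem_essImage
      (F := (Functor.const C : Discrete α ⥤ _)) F
    exact ⟨φ.symm ≪≫ (Functor.const C).mapIso (φ.app c)⟩
  exact { toIsPreconnected := hpre, is_nonempty := hne }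

section Core

variable {A : Type u₁} {B : Type u₂} [Category.{v₁} A] [Category.{v₂} B]
  (j : A ⥤ B) (hj : Ultimate j) (G : Type u₃) [Groupoid.{v₃} G]

include hj

lemma ultimate_faithful : ((Functor.whiskeringLeft A B G).obj j).Faithful := by
  have hconn : ∀ b : B, IsConnected (StructuredArrow b j) :=
    fun b => isConnected_of_piOneTrivial (hj b)
  constructor
  intro F₁ F₂ α β hαβ
  ext b
  have e : StructuredArrow b j := Classical.choice (hconn b).is_nonempty
  have hα : F₁.map e.hom ≫ α.app (j.obj e.right) = α.app b ≫ F₂.map e.hom := α.naturality e.hom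
  have hβ : F₁.map e.hom ≫ β.app (j.obj e.right) = β.app b ≫ F₂.map e.hom := β.naturality e.hom
  have happ : α.app (j.obj e.right) = β.app (j.obj e.right) :=
    congrArg (fun τ => NatTrans.app τ e.right) hαβ
  have : α.app b ≫ F₂.map e.hom = β.app b ≫ F₂.map e.hom := by
    rw [← hα, ← hβ, happ]
  exact (cancel_mono (F₂.map e.hom)).mp this

lemma ultimate_full : ((Functor.whiskeringLeft A B G).obj j).Full := by
  have hconn : ∀ b : B, IsConnected (StructuredArrow b j) :=
    fun b => isConnected_of_piOneTrivial (hj b)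
  have e₀ : ∀ b : B, StructuredArrow b j := fun b => Classical.choice (hconn b).is_nonempty
  constructor
  intro F₁ F₂ γ
  -- independence of the choice of structured arrow
  have indep : ∀ (b : B) (e₁ e₂ : StructuredArrow b j),
      F₁.map e₁.hom ≫ γ.app e₁.right ≫ inv (F₂.map e₁.hom) =
      F₁.map e₂.hom ≫ γ.app e₂.right ≫ inv (F₂.map e₂.hom) := by
    intro b e₁ e₂
    haveI := hconn b
    refine constant_of_preserves_morphisms
      (fun e : StructuredArrow b j => F₁.map e.hom ≫ γ.app e.right ≫ inv (F₂.map e.hom))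
      ?_ e₁ e₂
    intro x y k
    have hw : x.hom ≫ j.map k.right = y.hom := StructuredArrow.w k
    have hnat := γ.naturality k.right
    dsimp at hnat
    rw [← hw]
    simp only [Functor.map_comp, Category.assoc, IsIso.inv_comp]
    slice_rhs 2 3 => rw [hnat]
    simp
  refine ⟨{ app := fun b => F₁.map (e₀ b).hom ≫ γ.app (e₀ b).right ≫ inv (F₂.map (e₀ b).hom),
            naturality := ?_ }, ?_⟩
  · intro b b' φ
    rw [indep b (e₀ b) ((StructuredArrow.map φ).obj (e₀ b'))]
    simp
  · ext a
    have h1 := indep (j.obj a) (e₀ (j.obj a)) (StructuredArrow.mk (𝟙 (j.obj a)))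
    simp only [StructuredArrow.mk_hom_eq_self, StructuredArrow.mk_right, Functor.map_id,
      Category.id_comp, IsIso.inv_id, Category.comp_id] at h1
    simpa using h1

lemma ultimate_essSurj : ((Functor.whiskeringLeft A B G).obj j).EssSurj := by
  have hconn : ∀ b : B, IsConnected (StructuredArrow b j) :=
    fun b => isConnected_of_piOneTrivial (hj b)
  have e₀ : ∀ b : B, StructuredArrow b j := fun b => Classical.choice (hconn b).is_nonempty
  constructor
  intro F
  -- choose, for each b, an object g b and an iso from the constant functor
  have hg : ∀ b : B, ∃ g : G,
      Nonempty ((Functor.const (StructuredArrow b j)).obj g ≅ StructuredArrow.proj b j ⋙ F) := by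
    intro b
    haveI := const_isEquivalence (hj b) G
    haveI : (Functor.const (StructuredArrow b j) : G ⥤ _).EssSurj := inferInstance
    obtain ⟨x, ⟨φ⟩⟩ := Functor.EssSurj.mem_essImage
      (F := (Functor.const (StructuredArrow b j) : G ⥤ _)) (StructuredArrow.proj b j ⋙ F)
    exact ⟨x, ⟨φ⟩⟩
  choose g hσ using hg
  have σ : ∀ b : B, (Functor.const (StructuredArrow b j)).obj (g b) ≅
      StructuredArrow.proj b j ⋙ F := fun b => (hσ b).some
  -- naturality helpers
  have key : ∀ (b : B) (x y : StructuredArrow b j) (k : x ⟶ y),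
      (σ b).hom.app x ≫ F.map k.right = (σ b).hom.app y := by
    intro b x y k
    have := (σ b).hom.naturality k
    dsimp at this
    simp at this
    exact this.symm
  have keyinv : ∀ (b : B) (x y : StructuredArrow b j) (k : x ⟶ y),
      F.map k.right ≫ (σ b).inv.app y = (σ b).inv.app x := by
    intro b x y k
    have := (σ b).inv.naturality k
    dsimp at this
    simp at this
    exact this
  -- independence of choice
  have indep : ∀ {b b' : B} (β : b ⟶ b') (e₁ e₂ : StructuredArrow b' j),
      (σ b).hom.app ((StructuredArrow.map β).obj e₁) ≫ (σ b').inv.app e₁ =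
      (σ b).hom.app ((StructuredArrow.map β).obj e₂) ≫ (σ b').inv.app e₂ := by
    intro b b' β e₁ e₂
    haveI := hconn b'
    refine constant_of_preserves_morphisms
      (fun e : StructuredArrow b' j =>
        (σ b).hom.app ((StructuredArrow.map β).obj e) ≫ (σ b').inv.app e) ?_ e₁ e₂
    intro x y k
    rw [← keyinv b' x y k, ← key b _ _ ((StructuredArrow.map β).map k)]
    simp [StructuredArrow.map, StructuredArrow.Hom.right]
    exact (Category.assoc _ _ _).symm
  -- the extension functor
  refine ⟨{ obj := g,
            map := fun {b b'} β =>
              (σ b).hom.app ((StructuredArrow.map β).obj (e₀ b')) ≫ (σ b').inv.app (e₀ b'),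
            map_id := ?_, map_comp := ?_ }, ⟨?_⟩⟩
  · intro b
    have hk : (σ b).hom.app ((StructuredArrow.map (𝟙 b)).obj (e₀ b)) =
        (σ b).hom.app (e₀ b) := by
      have h := key b ((StructuredArrow.map (𝟙 b)).obj (e₀ b)) (e₀ b)
        (StructuredArrow.homMk (𝟙 (e₀ b).right) (by simp))
      exact (Category.comp_id _).symm.trans
        ((congrArg (fun t => (σ b).hom.app ((StructuredArrow.map (𝟙 b)).obj (e₀ b)) ≫ t)
          (F.map_id (e₀ b).right).symm).trans h)
    rw [hk]
    exact Iso.hom_inv_id_app (σ b) (e₀ b)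
  · intro b b' b'' β β'
    rw [indep β (e₀ b') ((StructuredArrow.map β').obj (e₀ b''))]
    have hk : (σ b).hom.app ((StructuredArrow.map (β ≫ β')).obj (e₀ b'')) =
        (σ b).hom.app ((StructuredArrow.map β).obj ((StructuredArrow.map β').obj (e₀ b''))) := by
      have h := key b ((StructuredArrow.map (β ≫ β')).obj (e₀ b''))
        ((StructuredArrow.map β).obj ((StructuredArrow.map β').obj (e₀ b'')))
        (StructuredArrow.homMk (𝟙 (e₀ b'').right) (by simp))
      exact (Category.comp_id _).symm.trans
        ((congrArg (fun t => (σ b).hom.app ((StructuredArrow.map (β ≫ β')).obj (e₀ b'')) ≫ t)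
          (F.map_id (e₀ b'').right).symm).trans h)
    rw [hk]
    refine Eq.trans ?_ (Category.assoc _ _ _).symm
    congr 1
    exact (Iso.inv_hom_id_app_assoc (σ b') ((StructuredArrow.map β').obj (e₀ b'')) _).symm
  · -- j ⋙ F' ≅ F
    refine NatIso.ofComponents
      (fun a => (σ (j.obj a)).app (StructuredArrow.mk (𝟙 (j.obj a)))) ?_
    intro a a' f
    dsimp only [Functor.whiskeringLeft, Functor.comp_map, Iso.app_hom]
    rw [indep (j.map f) (e₀ (j.obj a')) (StructuredArrow.mk (𝟙 (j.obj a')))]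
    have hk := key (j.obj a) (StructuredArrow.mk (𝟙 (j.obj a)))
      ((StructuredArrow.map (j.map f)).obj (StructuredArrow.mk (𝟙 (j.obj a'))))
      (StructuredArrow.homMk f (by simp))
    simp only [StructuredArrow.homMk_right] at hk
    refine (Category.assoc _ _ _).trans ?_
    refine Eq.trans ?_ hk.symm
    refine Eq.trans ?_ (Category.comp_id _)
    congr 1
    exact Iso.inv_hom_id_app (σ (j.obj a')) (StructuredArrow.mk (𝟙 (j.obj a')))

end Core


noncomputable def piOneGroupoid (C : Type u₁) [Category.{v₁} C] : Groupoid (piOne C) := by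
  apply Groupoid.ofIsIso
  intro X Y f
  have htop := Localization.Construction.morphismProperty_eq_top'
    (W := (⊤ : MorphismProperty C)) (MorphismProperty.isomorphisms _)
    (fun _ _ f => Localization.inverts (⊤ : MorphismProperty C).Q ⊤ f
      (MorphismProperty.top_apply _))
    (fun X Y e he => by
      rw [MorphismProperty.isomorphisms.iff] at he ⊢
      infer_instance)
  have : (MorphismProperty.isomorphisms (piOne C)) f := by
    rw [htop]; trivial
  rwa [MorphismProperty.isomorphisms.iff] at this

lemma whisker_piOneMap_isEquivalence {A : Type u₁} {B : Type u₂}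
    [Category.{v₁} A] [Category.{v₂} B] (j : A ⥤ B) (hj : Ultimate j)
    (G : Type u₃) [Groupoid.{v₃} G] :
    ((Functor.whiskeringLeft (piOne A) (piOne B) G).obj (piOneMap j)).IsEquivalence := by
  haveI h1 : ((Functor.whiskeringLeft A (piOne A) G).obj (⊤ : MorphismProperty A).Q).IsEquivalence :=
    whiskeringLeft_loc_isEquivalence _ ⊤ G
  haveI h2 : ((Functor.whiskeringLeft B (piOne B) G).obj (⊤ : MorphismProperty B).Q).IsEquivalence :=
    whiskeringLeft_loc_isEquivalence _ ⊤ G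
  haveI h3 : ((Functor.whiskeringLeft A B G).obj j).IsEquivalence :=
    ⟨ultimate_faithful j hj G, ultimate_full j hj G, ultimate_essSurj j hj G⟩
  have hfac : (⊤ : MorphismProperty A).Q ⋙ piOneMap j = j ⋙ (⊤ : MorphismProperty B).Q :=
    Localization.Construction.fac _ _
  have heq : (Functor.whiskeringLeft (piOne A) (piOne B) G).obj (piOneMap j) ⋙
      (Functor.whiskeringLeft A (piOne A) G).obj (⊤ : MorphismProperty A).Q =
      (Functor.whiskeringLeft B (piOne B) G).obj (⊤ : MorphismProperty B).Q ⋙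
      (Functor.whiskeringLeft A B G).obj j := by
    have e1 : (Functor.whiskeringLeft (piOne A) (piOne B) G).obj (piOneMap j) ⋙
        (Functor.whiskeringLeft A (piOne A) G).obj (⊤ : MorphismProperty A).Q =
        (Functor.whiskeringLeft A (piOne B) G).obj ((⊤ : MorphismProperty A).Q ⋙ piOneMap j) := rfl
    have e2 : (Functor.whiskeringLeft B (piOne B) G).obj (⊤ : MorphismProperty B).Q ⋙
        (Functor.whiskeringLeft A B G).obj j =
        (Functor.whiskeringLeft A (piOne B) G).obj (j ⋙ (⊤ : MorphismProperty B).Q) := rfl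
    rw [e1, e2, hfac]
  haveI : ((Functor.whiskeringLeft (piOne A) (piOne B) G).obj (piOneMap j) ⋙
      (Functor.whiskeringLeft A (piOne A) G).obj (⊤ : MorphismProperty A).Q).IsEquivalence := by
    rw [heq]; infer_instance
  exact Functor.isEquivalence_of_comp_right _
    ((Functor.whiskeringLeft A (piOne A) G).obj (⊤ : MorphismProperty A).Q)


/-- Ultimate functors are taken by `π₁` to equivalences: if `π₁ (b/j) ≃ 1` for all `b`,
then `π₁ j : π₁ A ⥤ π₁ B` is an equivalence of groupoids. -/
theorem piOneMap_isEquivalence_of_ultimate {A : Type u₁} {B : Type u₂}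
    [Category.{v₁} A] [Category.{v₂} B] (j : A ⥤ B) (hj : Ultimate j) :
    (piOneMap j).IsEquivalence := by
  letI : Groupoid (piOne A) := piOneGroupoid A
  letI : Groupoid (piOne B) := piOneGroupoid B
  haveI hA := whisker_piOneMap_isEquivalence j hj (piOne A)
  haveI hB := whisker_piOneMap_isEquivalence j hj (piOne B)
  haveI : ((Functor.whiskeringLeft (piOne A) (piOne B) (piOne A)).obj (piOneMap j)).EssSurj :=
    hA.essSurj
  obtain ⟨H, ⟨η⟩⟩ := Functor.EssSurj.mem_essImage
    (F := (Functor.whiskeringLeft (piOne A) (piOne B) (piOne A)).obj (piOneMap j)) (𝟭 (piOne A))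
  -- η : piOneMap j ⋙ H ≅ 𝟭 (piOne A)
  have ε : H ⋙ piOneMap j ≅ 𝟭 (piOne B) := by
    haveI : ((Functor.whiskeringLeft (piOne A) (piOne B) (piOne B)).obj (piOneMap j)).Full :=
      hB.full
    haveI : ((Functor.whiskeringLeft (piOne A) (piOne B) (piOne B)).obj (piOneMap j)).Faithful :=
      hB.faithful
    refine ((Functor.whiskeringLeft (piOne A) (piOne B) (piOne B)).obj (piOneMap j)).preimageIso ?_
    exact (Functor.associator (piOneMap j) H (piOneMap j)).symm ≪≫
      Functor.isoWhiskerRight η (piOneMap j) ≪≫ (piOneMap j).leftUnitor ≪≫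
      (piOneMap j).rightUnitor.symm
  exact Functor.IsEquivalence.mk' H η.symm ε
end

section
/- If j : A → B is an ultimate functor and k : B → C is any functor, then k is ultimate if and only if the composite k ∘ j is ultimate. -/
open CategoryTheory

universe v₁ v₂ v₃ u₁ u₂ u₃

namespace UltimateAux

section Basic

variable {X : Type u₁} [Category.{v₁} X]

/-- Every morphism in `π₁ X` is an isomorphism. -/
lemma isIso_piOne {a b : piOne X} (f : a ⟶ b) : IsIso f := by
  have h : (MorphismProperty.isomorphisms (piOne X)) = ⊤ := by
    apply Localization.Construction.morphismProperty_eq_top'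
    · intro _ _ f
      exact Localization.inverts (⊤ : MorphismProperty X).Q ⊤ f trivial
    · intro _ _ e _
      exact inferInstanceAs (IsIso e.inv)
  have : MorphismProperty.isomorphisms (piOne X) f := by rw [h]; trivial
  exact this

lemma top_isInvertedBy {G : Type u₃} [Category.{v₃} G]
    (hG : ∀ {a b : G} (f : a ⟶ b), IsIso f) (D : X ⥤ G) :
    (⊤ : MorphismProperty X).IsInvertedBy D :=
  fun _ _ f _ => hG (D.map f)

/-- `π₁ X` is trivial iff the localization functor is isomorphic to a constant functor. -/
lemma piOneTrivial_iff :
    PiOneTrivial X ↔ ∃ p : piOne X,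
      Nonempty ((⊤ : MorphismProperty X).Q ≅ (Functor.const X).obj p) := by
  constructor
  · rintro ⟨e⟩
    refine ⟨e.inverse.obj ⟨⟨⟩⟩, ⟨?_⟩⟩
    calc (⊤ : MorphismProperty X).Q
        ≅ (⊤ : MorphismProperty X).Q ⋙ 𝟭 _ := (Functor.rightUnitor _).symm
      _ ≅ (⊤ : MorphismProperty X).Q ⋙ (e.functor ⋙ e.inverse) :=
            Functor.isoWhiskerLeft _ e.unitIso
      _ ≅ ((⊤ : MorphismProperty X).Q ⋙ e.functor) ⋙ e.inverse :=
            (Functor.associator _ _ _).symm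
      _ ≅ (Functor.const X).obj ⟨⟨⟩⟩ ⋙ e.inverse :=
            Functor.isoWhiskerRight (Functor.punitExt _ _) _
      _ ≅ (Functor.const X).obj (e.inverse.obj ⟨⟨⟩⟩) := Functor.constComp _ _ _
  · rintro ⟨p, ⟨ι⟩⟩
    -- lift the isomorphism to the localized category
    letI : Localization.Lifting (⊤ : MorphismProperty X).Q ⊤
        (⊤ : MorphismProperty X).Q (𝟭 _) := ⟨Functor.rightUnitor _⟩
    letI : Localization.Lifting (⊤ : MorphismProperty X).Q ⊤
        ((Functor.const X).obj p) ((Functor.const (piOne X)).obj p) :=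
      ⟨NatIso.ofComponents (fun _ => Iso.refl _) (by simp)⟩
    have ι' : 𝟭 (piOne X) ≅ (Functor.const (piOne X)).obj p :=
      Localization.liftNatIso (⊤ : MorphismProperty X).Q ⊤
        (⊤ : MorphismProperty X).Q ((Functor.const X).obj p) _ _ ι
    refine ⟨CategoryTheory.Equivalence.mk (Functor.star _) (Functor.fromPUnit.{0} p) ?_ (Functor.punitExt _ _)⟩
    exact ι' ≪≫ (NatIso.ofComponents (fun _ => Iso.refl _) (by simp)).symm

lemma nonempty_of_piOneTrivial (h : PiOneTrivial X) : Nonempty X := by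
  obtain ⟨p, -⟩ := piOneTrivial_iff.1 h
  haveI := Localization.essSurj (⊤ : MorphismProperty X).Q ⊤
  exact ⟨(⊤ : MorphismProperty X).Q.objPreimage p⟩

lemma zigzag_of_piOneTrivial (h : PiOneTrivial X) (x y : X) : Zigzag x y := by
  obtain ⟨e⟩ := h
  haveI : Subsingleton (Discrete PUnit.{1}) := ⟨by rintro ⟨⟨⟩⟩ ⟨⟨⟩⟩; rfl⟩
  let L := (⊤ : MorphismProperty X).Q
  have φ : L.obj x ⟶ L.obj y :=
    e.unitIso.hom.app (L.obj x) ≫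
      e.inverse.map (eqToHom (Subsingleton.elim _ _)) ≫ e.unitIso.inv.app (L.obj y)
  have : ∀ g : StructuredArrow (L.obj x) L, Zigzag x g.right := by
    intro g
    refine Localization.induction_structuredArrow L ⊤ (fun g => Zigzag x g.right)
      Relation.ReflTransGen.refl ?_ ?_ g
    · intro Y₁ Y₂ f φ hφ
      exact hφ.tail (Or.inl ⟨f⟩)
    · intro Y₁ Y₂ w _ φ hφ
      exact hφ.tail (Or.inr ⟨w⟩)
  simpa using this (StructuredArrow.mk φ)

end Basic


section Descent

variable {P : Type u₁} {Q : Type u₂} [Category.{v₁} P] [Category.{v₂} Q] (F : P ⥤ Q)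
variable {G : Type u₃} [Category.{v₃} G]

lemma descend_unique (h₁ : ∀ q : Q, Nonempty (StructuredArrow q F))
    (hG : ∀ {a b : G} (f : a ⟶ b), IsIso f) {M N : Q ⥤ G} {σ σ' : M ⟶ N}
    (h : Functor.whiskerLeft F σ = Functor.whiskerLeft F σ') : σ = σ' := by
  ext q
  obtain ⟨o⟩ := h₁ q
  haveI := hG (N.map o.hom)
  rw [← cancel_mono (N.map o.hom)]
  have happ : σ.app (F.obj o.right) = σ'.app (F.obj o.right) :=
    congrArg (fun τ => NatTrans.app τ o.right) h
  have e1 : σ.app q ≫ N.map o.hom = M.map o.hom ≫ σ.app (F.obj o.right) :=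
    (σ.naturality o.hom).symm
  have e2 : σ'.app q ≫ N.map o.hom = M.map o.hom ≫ σ'.app (F.obj o.right) :=
    (σ'.naturality o.hom).symm
  rw [e1, e2, happ]

variable {F} in
lemma descend_exists (h₁ : ∀ q : Q, Nonempty (StructuredArrow q F))
    (h₂ : ∀ (q : Q) (o o' : StructuredArrow q F), Zigzag o o')
    (hG : ∀ {a b : G} (f : a ⟶ b), IsIso f) {M N : Q ⥤ G}
    (τ : F ⋙ M ⟶ F ⋙ N) : ∃ σ : M ⟶ N, Functor.whiskerLeft F σ = τ := by
  haveI : ∀ {a b : G} (f : a ⟶ b), IsIso f := hG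
  let S : ∀ (q : Q), StructuredArrow q F → (M.obj q ⟶ N.obj q) :=
    fun q o => M.map o.hom ≫ τ.app o.right ≫ inv (N.map o.hom)
  have hstep : ∀ (q : Q) (o o' : StructuredArrow q F) (m : o ⟶ o'), S q o = S q o' := by
    intro q o o' m
    have hw : o.hom ≫ F.map m.right = o'.hom := StructuredArrow.w m
    have hn : M.map (F.map m.right) ≫ τ.app o'.right = τ.app o.right ≫ N.map (F.map m.right) :=
      τ.naturality m.right
    dsimp [S]
    rw [← hw, Functor.map_comp, Functor.map_comp, Category.assoc, reassoc_of% hn]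
    simp
  have hind : ∀ (q : Q) (o o' : StructuredArrow q F), S q o = S q o' := by
    intro q o o'
    induction h₂ q o o' with
    | refl => rfl
    | tail _ zag ih =>
        rcases zag with ⟨⟨m⟩⟩ | ⟨⟨m⟩⟩
        · exact ih.trans (hstep _ _ _ m)
        · exact ih.trans (hstep _ _ _ m).symm
  have key : ∀ (q q' : Q) (v : q ⟶ q') (o' : StructuredArrow q' F),
      M.map v ≫ S q' o' = S q ((StructuredArrow.map v).obj o') ≫ N.map v := by
    intro q q' v o'
    rw [StructuredArrow.eq_mk o', StructuredArrow.map_mk]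
    dsimp [S]
    simp
  refine ⟨{ app := fun q => S q (h₁ q).some, naturality := ?_ }, ?_⟩
  · intro q q' v
    show M.map v ≫ S q' (h₁ q').some = S q (h₁ q).some ≫ N.map v
    rw [key q q' v (h₁ q').some,
      hind q ((StructuredArrow.map v).obj (h₁ q').some) (h₁ q).some]
  · ext p
    show S (F.obj p) (h₁ (F.obj p)).some = τ.app p
    rw [hind _ _ (StructuredArrow.mk (𝟙 (F.obj p)))]
    dsimp [S]
    simp

variable {F} in
lemma descend_iso (h₁ : ∀ q : Q, Nonempty (StructuredArrow q F))
    (h₂ : ∀ (q : Q) (o o' : StructuredArrow q F), Zigzag o o')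
    (hG : ∀ {a b : G} (f : a ⟶ b), IsIso f) {M N : Q ⥤ G}
    (e : F ⋙ M ≅ F ⋙ N) : Nonempty (M ≅ N) := by
  obtain ⟨σ, hσ⟩ := descend_exists h₁ h₂ hG e.hom
  obtain ⟨σ', hσ'⟩ := descend_exists h₁ h₂ hG e.inv
  refine ⟨⟨σ, σ', ?_, ?_⟩⟩
  · apply descend_unique F h₁ hG
    rw [Functor.whiskerLeft_comp, hσ, hσ']
    simp
  · apply descend_unique F h₁ hG
    rw [Functor.whiskerLeft_comp, hσ, hσ']
    simp

end Descent

section Const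

variable {Z : Type u₁} [Category.{v₁} Z] {G : Type u₃} [Category.{v₃} G]

lemma exists_iso_const (hZ : PiOneTrivial Z)
    (hG : ∀ {a b : G} (f : a ⟶ b), IsIso f) (D : Z ⥤ G) :
    ∃ g : G, Nonempty (D ≅ (Functor.const Z).obj g) := by
  obtain ⟨p, ⟨ι⟩⟩ := piOneTrivial_iff.1 hZ
  have hD := top_isInvertedBy hG D
  refine ⟨(Localization.lift D hD (⊤ : MorphismProperty Z).Q).obj p, ⟨?_⟩⟩
  calc D ≅ (⊤ : MorphismProperty Z).Q ⋙ Localization.lift D hD (⊤ : MorphismProperty Z).Q :=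
        (Localization.fac D hD (⊤ : MorphismProperty Z).Q).symm
    _ ≅ (Functor.const Z).obj p ⋙ Localization.lift D hD (⊤ : MorphismProperty Z).Q :=
        Functor.isoWhiskerRight ι _
    _ ≅ (Functor.const Z).obj _ := Functor.constComp _ _ _

end Const

section Extend

variable {P : Type u₁} {Q : Type u₂} [Category.{v₁} P] [Category.{v₂} Q] {F : P ⥤ Q}
variable {G : Type u₃} [Category.{v₃} G]

lemma extend_exists (h₁ : ∀ q : Q, Nonempty (StructuredArrow q F))
    (h₂ : ∀ (q : Q) (o o' : StructuredArrow q F), Zigzag o o')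
    (M : P ⥤ G)
    (hconst : ∀ q : Q, ∃ g : G,
      Nonempty ((StructuredArrow.proj q F ⋙ M) ≅ (Functor.const (StructuredArrow q F)).obj g)) :
    ∃ N : Q ⥤ G, Nonempty (F ⋙ N ≅ M) := by
  choose g hψ using hconst
  have ψ : ∀ q : Q, (StructuredArrow.proj q F ⋙ M) ≅
      (Functor.const (StructuredArrow q F)).obj (g q) := fun q => (hψ q).some
  let cand : ∀ {q q' : Q} (v : q ⟶ q') (o : StructuredArrow q' F), (g q ⟶ g q') :=
    fun {q q'} v o => (ψ q).inv.app (StructuredArrow.mk (v ≫ o.hom)) ≫ (ψ q').hom.app o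
  have hstep : ∀ {q q' : Q} (v : q ⟶ q') (o o' : StructuredArrow q' F) (m : o ⟶ o'),
      cand v o = cand v o' := by
    intro q q' v o o' m
    have hw : (StructuredArrow.mk (v ≫ o.hom)).hom ≫ F.map m.right
        = (StructuredArrow.mk (v ≫ o'.hom)).hom := by
      simp only [StructuredArrow.mk_hom_eq_self]
      rw [Category.assoc, StructuredArrow.w m]
    have n1 : (ψ q').hom.app o = M.map m.right ≫ (ψ q').hom.app o' := by
      have := (ψ q').hom.naturality m
      dsimp at this
      simp at this
      exact this.symm
    have n2 : (ψ q).inv.app (StructuredArrow.mk (v ≫ o.hom)) ≫ M.map m.right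
        = (ψ q).inv.app (StructuredArrow.mk (v ≫ o'.hom)) := by
      have := (ψ q).inv.naturality
        (StructuredArrow.homMk (f := StructuredArrow.mk (v ≫ o.hom))
          (f' := StructuredArrow.mk (v ≫ o'.hom)) m.right hw)
      dsimp at this
      simp at this
      exact this.symm
    dsimp only [cand]
    rw [n1, ← n2]
    exact (Category.assoc _ _ _).symm
  have hind : ∀ {q q' : Q} (v : q ⟶ q') (o o' : StructuredArrow q' F),
      cand v o = cand v o' := by
    intro q q' v o o'
    induction h₂ q' o o' with
    | refl => rfl
    | tail _ zag ih =>
        rcases zag with ⟨⟨m⟩⟩ | ⟨⟨m⟩⟩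
        · exact ih.trans (hstep _ _ _ m)
        · exact ih.trans (hstep _ _ _ m).symm
  refine ⟨{ obj := g, map := fun {q q'} v => cand v (h₁ q').some,
            map_id := ?_, map_comp := ?_ }, ⟨?_⟩⟩
  · intro q
    show cand (𝟙 q) (h₁ q).some = 𝟙 (g q)
    obtain ⟨o⟩ := h₁ q
    have e : cand (𝟙 q) (h₁ q).some = cand (𝟙 q) (StructuredArrow.mk o.hom) := hind _ _ _
    rw [e]
    dsimp only [cand]
    have h5 : 𝟙 q ≫ (StructuredArrow.mk o.hom).hom = o.hom := by simp
    exact (congrArg (fun t => (ψ q).inv.app (StructuredArrow.mk t) ≫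
      (ψ q).hom.app (StructuredArrow.mk o.hom)) h5).trans ((ψ q).inv_hom_id_app _)
  · intro q q' q'' v w
    show cand (v ≫ w) (h₁ q'').some = cand v (h₁ q').some ≫ cand w (h₁ q'').some
    obtain ⟨o⟩ := h₁ q''
    have e1 : cand (v ≫ w) (h₁ q'').some = cand (v ≫ w) o := hind _ _ _
    have e2 : cand v (h₁ q').some = cand v (StructuredArrow.mk (w ≫ o.hom)) := hind _ _ _
    have e3 : cand w (h₁ q'').some = cand w o := hind _ _ _
    rw [e1, e2, e3]
    dsimp only [cand]
    simp only [StructuredArrow.mk_hom_eq_self, Category.assoc, Iso.hom_inv_id_app_assoc]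
    refine Eq.trans ?_ (Category.assoc _ _ _).symm
    refine Eq.trans ?_ (congrArg (fun t => (ψ q).inv.app (StructuredArrow.mk (v ≫ w ≫ o.hom)) ≫ t)
      ((ψ q').hom_inv_id_app_assoc (StructuredArrow.mk (w ≫ o.hom)) ((ψ q'').hom.app o))).symm
    exact congrArg (fun t => (ψ q).inv.app (StructuredArrow.mk t) ≫ (ψ q'').hom.app o)
      (Category.assoc v w o.hom)
  · refine NatIso.ofComponents
      (fun p => ((ψ (F.obj p)).app (StructuredArrow.mk (𝟙 (F.obj p)))).symm) ?_
    intro p p₁ f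
    have n3 : (ψ (F.obj p)).inv.app (StructuredArrow.mk (𝟙 (F.obj p))) ≫ M.map f
        = (ψ (F.obj p)).inv.app (StructuredArrow.mk (F.map f)) := by
      have := (ψ (F.obj p)).inv.naturality
        (StructuredArrow.homMk (f := StructuredArrow.mk (𝟙 (F.obj p)))
          (f' := StructuredArrow.mk (F.map f)) f (by simp))
      dsimp at this
      simp at this
      exact this.symm
    show cand (F.map f) (h₁ (F.obj p₁)).some ≫
        (ψ (F.obj p₁)).inv.app (StructuredArrow.mk (𝟙 (F.obj p₁))) =
      (ψ (F.obj p)).inv.app (StructuredArrow.mk (𝟙 (F.obj p))) ≫ M.map f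
    have e4 : cand (F.map f) (h₁ (F.obj p₁)).some
        = cand (F.map f) (StructuredArrow.mk (𝟙 (F.obj p₁))) := hind _ _ _
    rw [e4]
    dsimp only [cand]
    refine (Category.assoc _ _ _).trans ?_
    refine Eq.trans (congrArg (fun t => (ψ (F.obj p)).inv.app
      (StructuredArrow.mk (F.map f ≫ (StructuredArrow.mk (𝟙 (F.obj p₁))).hom)) ≫ t)
      ((ψ (F.obj p₁)).hom_inv_id_app (StructuredArrow.mk (𝟙 (F.obj p₁))))) ?_
    have h6 : F.map f ≫ (StructuredArrow.mk (𝟙 (F.obj p₁))).hom = F.map f := by simp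
    exact ((congrArg (fun t => (ψ (F.obj p)).inv.app (StructuredArrow.mk t) ≫
      𝟙 ((StructuredArrow.proj (F.obj p₁) F ⋙ M).obj
        (StructuredArrow.mk (𝟙 (F.obj p₁))))) h6).trans
      ((Category.comp_id _).trans n3.symm))

end Extend

section Transfer

variable {P : Type u₁} {Q : Type u₂} [Category.{v₁} P] [Category.{v₂} Q]

/-- `F ⋙ (const Q).obj g ≅ (const P).obj g`. -/
def compConstIso' (F : P ⥤ Q) {G : Type u₃} [Category.{v₃} G] (g : G) :
    F ⋙ (Functor.const Q).obj g ≅ (Functor.const P).obj g :=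
  NatIso.ofComponents (fun _ => Iso.refl _) (by simp)

/-- Quillen's theorem A for fundamental groupoids: an ultimate functor
induces a bijection of `π₁`-trivialities. -/
lemma transfer (F : P ⥤ Q) (hF : ∀ q : Q, PiOneTrivial (StructuredArrow q F)) :
    PiOneTrivial P ↔ PiOneTrivial Q := by
  have hne : ∀ q : Q, Nonempty (StructuredArrow q F) :=
    fun q => nonempty_of_piOneTrivial (hF q)
  have hconn : ∀ (q : Q) (o o' : StructuredArrow q F), Zigzag o o' :=
    fun q => zigzag_of_piOneTrivial (hF q)
  constructor
  · intro hP
    obtain ⟨p₀, ⟨ιP⟩⟩ := piOneTrivial_iff.1 hP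
    have hG : ∀ {a b : piOne Q} (f : a ⟶ b), IsIso f := fun f => isIso_piOne f
    have hD : (⊤ : MorphismProperty P).IsInvertedBy (F ⋙ (⊤ : MorphismProperty Q).Q) :=
      top_isInvertedBy hG _
    let K := Localization.lift (F ⋙ (⊤ : MorphismProperty Q).Q) hD (⊤ : MorphismProperty P).Q
    have chain : F ⋙ (⊤ : MorphismProperty Q).Q ≅ F ⋙ (Functor.const Q).obj (K.obj p₀) :=
      (Localization.fac _ hD _).symm ≪≫ Functor.isoWhiskerRight ιP K ≪≫ Functor.constComp _ _ _
        ≪≫ (compConstIso' F (K.obj p₀)).symm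
    exact piOneTrivial_iff.2 ⟨K.obj p₀, descend_iso hne hconn hG chain⟩
  · intro hQ
    obtain ⟨q₀, ⟨ιQ⟩⟩ := piOneTrivial_iff.1 hQ
    have hG : ∀ {a b : piOne P} (f : a ⟶ b), IsIso f := fun f => isIso_piOne f
    obtain ⟨N, ⟨α⟩⟩ := extend_exists hne hconn ((⊤ : MorphismProperty P).Q)
      (fun q => exists_iso_const (hF q) hG _)
    have hN : (⊤ : MorphismProperty Q).IsInvertedBy N := top_isInvertedBy hG N
    let Nbar := Localization.lift N hN (⊤ : MorphismProperty Q).Q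
    have chain : (⊤ : MorphismProperty P).Q ≅ (Functor.const P).obj (Nbar.obj q₀) :=
      α.symm ≪≫ Functor.isoWhiskerLeft F ((Localization.fac N hN _).symm ≪≫ Functor.isoWhiskerRight ιQ Nbar
        ≪≫ Functor.constComp _ _ _) ≪≫ compConstIso' F (Nbar.obj q₀)
    exact piOneTrivial_iff.2 ⟨Nbar.obj q₀, ⟨chain⟩⟩

end Transfer

section Equiv

variable {X : Type u₁} {Y : Type u₂} [Category.{v₁} X] [Category.{v₂} Y]

lemma piOneTrivial_of_equivalence (e : X ≌ Y) (h : PiOneTrivial X) : PiOneTrivial Y := by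
  obtain ⟨ε⟩ := h
  haveI : (e.functor ⋙ (⊤ : MorphismProperty Y).Q).IsLocalization (⊤ : MorphismProperty X) := by
    refine Functor.IsLocalization.of_equivalence_source (⊤ : MorphismProperty Y).Q ⊤
      (e.functor ⋙ (⊤ : MorphismProperty Y).Q) ⊤ e.symm ?_
      (top_isInvertedBy (fun f => isIso_piOne f) _) ?_
    · intro a b f _
      exact MorphismProperty.le_isoClosure _ _ (by trivial)
    · exact (Functor.associator _ _ _).symm ≪≫
        Functor.isoWhiskerRight e.counitIso _ ≪≫ Functor.leftUnitor _
  exact ⟨(Localization.uniq ((⊤ : MorphismProperty X).Q)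
    (e.functor ⋙ (⊤ : MorphismProperty Y).Q) ⊤).symm.trans ε⟩

end Equiv

end UltimateAux

open UltimateAux

/-- If `j : A ⥤ B` is ultimate and `k : B ⥤ C` is any functor, then `k` is ultimate
if and only if the composite `j ⋙ k` is ultimate. -/
theorem ultimate_comp_iff {A : Type u₁} {B : Type u₂} {C : Type u₃}
    [Category.{v₁} A] [Category.{v₂} B] [Category.{v₃} C]
    (j : A ⥤ B) (hj : Ultimate j) (k : B ⥤ C) :
    Ultimate k ↔ Ultimate (j ⋙ k) := by
  have key : ∀ c : C, PiOneTrivial (StructuredArrow c (j ⋙ k)) ↔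
      PiOneTrivial (StructuredArrow c k) := by
    intro c
    refine transfer (StructuredArrow.pre c j k) (fun q => ?_)
    exact piOneTrivial_of_equivalence (StructuredArrow.preEquivalence j q).symm (hj q.right)
  exact ⟨fun h c => (key c).2 (h c), fun h c => (key c).1 (h c)⟩
end
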